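/- Let V be a finite-dimensional real inner product space, φ an alternating p-form on V, and ξ = (e₁,…,e_p) an orthonormal p-tuple. If there exists a constant c ∈ ℝ such that λ_φ(A)(e₁,…,e_p) = c·tr_ξ A for every linear endomorphism A of V, then c = φ(e₁,…,e_p) and ξ is φ-critical. (Remark A.5) -/

import Mathlib

open scoped RealInnerProductSpace

noncomputable section

variable {V : Type*} [NormedAddCommGroup V] [InnerProductSpace ℝ V] [FiniteDimensional ℝ V]

/-- `λ_φ(A)`, the action of the endomorphism `A` on the alternating `p`-form `φ` as a
derivation: `λ_φ(A)(v₁,…,v_p) = Σ_k φ(v₁,…,A v_k,…,v_p)`. -/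
def lambdaForm {p : ℕ} (φ : V [⋀^Fin p]→ₗ[ℝ] ℝ) (A : V →ₗ[ℝ] V) (v : Fin p → V) : ℝ :=
  ∑ k, φ (Function.update v k (A (v k)))

/-- An orthonormal `p`-tuple `ξ = (e₁,…,e_p)` is `φ`-critical if `φ` vanishes on all the
first cousins of `ξ`, i.e. `φ(e₁,…,e_{k−1}, b, e_{k+1},…,e_p) = 0` for every index `k`
and every `b` orthogonal to `span{e₁,…,e_p}`. -/
def IsPhiCritical {p : ℕ} (φ : V [⋀^Fin p]→ₗ[ℝ] ℝ) (e : Fin p → V) : Prop :=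
  ∀ (k : Fin p) (b : V), b ∈ (Submodule.span ℝ (Set.range e))ᗮ →
    φ (Function.update e k b) = 0

/-!
Test the hypothesis on two endomorphisms. For `A = id` every summand of `λ_φ(A)(ξ)` is
`φ(ξ)` and `tr_ξ A = p`, so `p φ(ξ) = c p`. For the rank-one map `A = ⟨e_k, ·⟩ b` with
`b ⊥ ξ`, orthonormality kills every summand of `λ_φ(A)(ξ)` but the `k`-th, which is
`φ(e₁,…,b,…,e_p)`, while `tr_ξ A = ⟨e_k, b⟩ = 0`.
-/

section

omit [FiniteDimensional ℝ V]

theorem lambdaForm_id {p : ℕ} (φ : V [⋀^Fin p]→ₗ[ℝ] ℝ) (v : Fin p → V) :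
    lambdaForm φ LinearMap.id v = p * φ v := by
  simp [lambdaForm]

theorem Orthonormal.sum_inner_self {ι : Type*} [Fintype ι] {e : ι → V}
    (he : Orthonormal ℝ e) : ∑ j, ⟪e j, e j⟫ = Fintype.card ι := by
  simp [he.1]

theorem Orthonormal.innerₛₗ_smulRight_apply {ι : Type*} {e : ι → V} [DecidableEq ι]
    (he : Orthonormal ℝ e) (k j : ι) (b : V) :
    (innerₛₗ ℝ (e k)).smulRight b (e j) = if k = j then b else 0 := by
  simp [orthonormal_iff_ite.mp he k j]

theorem Orthonormal.sum_inner_innerₛₗ_smulRight {ι : Type*} [Fintype ι] {e : ι → V}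
    (he : Orthonormal ℝ e) (k : ι) (b : V) :
    ∑ j, ⟪e j, (innerₛₗ ℝ (e k)).smulRight b (e j)⟫ = ⟪e k, b⟫ := by
  classical
  simp [he.innerₛₗ_smulRight_apply, apply_ite (inner ℝ _)]

theorem Orthonormal.lambdaForm_innerₛₗ_smulRight {p : ℕ} (φ : V [⋀^Fin p]→ₗ[ℝ] ℝ)
    {e : Fin p → V} (he : Orthonormal ℝ e) (k : Fin p) (b : V) :
    lambdaForm φ ((innerₛₗ ℝ (e k)).smulRight b) e = φ (Function.update e k b) := by
  rw [lambdaForm, Finset.sum_eq_single k]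
  · rw [he.innerₛₗ_smulRight_apply, if_pos rfl]
  · intro j _ hjk
    rw [he.innerₛₗ_smulRight_apply, if_neg (Ne.symm hjk), φ.map_update_zero]
  · exact fun hk => absurd (Finset.mem_univ k) hk

end

theorem critical_of_lambdaForm_eq_smul_trace {p : ℕ} (hp : 1 ≤ p)
    (φ : V [⋀^Fin p]→ₗ[ℝ] ℝ)
    (e : Fin p → V) (he : Orthonormal ℝ e) (c : ℝ)
    (hc : ∀ A : V →ₗ[ℝ] V, lambdaForm φ A e = c * ∑ j, ⟪e j, A (e j)⟫) :
    c = φ e ∧ IsPhiCritical φ e := by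
  have hid := hc LinearMap.id
  simp only [LinearMap.id_apply, lambdaForm_id, he.sum_inner_self, Fintype.card_fin] at hid
  have hp0 : (p : ℝ) ≠ 0 := Nat.cast_ne_zero.mpr (Nat.one_le_iff_ne_zero.mp hp)
  refine ⟨mul_right_cancel₀ hp0 (by linarith), fun k b hb => ?_⟩
  have hek : ⟪e k, b⟫ = 0 :=
    Submodule.inner_right_of_mem_orthogonal (Submodule.subset_span (Set.mem_range_self k)) hb
  have hA := hc ((innerₛₗ ℝ (e k)).smulRight b)
  rwa [he.lambdaForm_innerₛₗ_smulRight, he.sum_inner_innerₛₗ_smulRight, hek, mul_zero] at hA
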